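/- arXiv:2511.12629 — 5 statements merged into one kernel-verified Lean document; each statement's English description precedes it below -/
import Mathlib

section
/- Every housing market with strict preferences has a core matching: there exists a permutation σ of Fin N that no nonempty coalition blocks. -/
/-!
Top trading cycles. Let every player of the current market `A` point at their favourite house in
`A`. This map sends everything into the finite set `A`, so it has periodic points, and on them it
is a bijection: these players trade along their cycles and leave, and the rest of the market is
handled recursively. No coalition blocks the result, since its member who leaves first already
holds their favourite among all houses present at that time, which include every house of the
coalition.
-/

/-- A nonempty coalition `S` blocks the matching `σ` in the housing market with
utility matrix `U`: the coalition can redistribute its own endowed houses via `τ`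
(mapping `S` into `S`, injectively on `S`) so that every member is strictly better off. -/
def Blocks {N : ℕ} (U : Fin N → Fin N → ℝ) (σ : Fin N → Fin N) (S : Set (Fin N)) : Prop :=
  S.Nonempty ∧ ∃ τ : Fin N → Fin N, Set.MapsTo τ S S ∧ Set.InjOn τ S ∧
    ∀ i ∈ S, U i (σ i) < U i (τ i)

/-- A matching is a core matching if no nonempty coalition blocks it. -/
def IsCoreMatching {N : ℕ} (U : Fin N → Fin N → ℝ) (σ : Fin N → Fin N) : Prop :=
  ∀ S : Set (Fin N), ¬ Blocks U σ S

open Function Set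

theorem Function.periodicPts_nonempty {α : Type*} [Finite α] [Nonempty α] (f : α → α) :
    (periodicPts f).Nonempty := by
  obtain ⟨x⟩ := ‹Nonempty α›
  obtain ⟨m, n, hmn, hx⟩ := Finite.exists_ne_map_eq_of_infinite (f^[·] x)
  wlog hlt : m < n generalizing m n
  · exact this n m hmn.symm hx.symm (by omega)
  refine ⟨f^[m] x, mk_mem_periodicPts (n := n - m) (by omega) ?_⟩
  rw [IsPeriodicPt, IsFixedPt, ← iterate_add_apply, Nat.sub_add_cancel hlt.le]
  exact hx.symm

theorem Set.BijOn.piecewise_of_subset {α : Type*} {s t : Set α} {f g : α → α}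
    [∀ x, Decidable (x ∈ t)] (hts : t ⊆ s) (hf : BijOn f t t) (hg : BijOn g (s \ t) (s \ t)) :
    BijOn (t.piecewise f g) s s := by
  have hf' := hf.congr (piecewise_eqOn t f g).symm
  have hg' := hg.congr fun x hx => (piecewise_eq_of_notMem t f g hx.2).symm
  rw [← union_sdiff_cancel hts]
  refine hf'.union hg' ((injOn_union disjoint_sdiff_right).2 ⟨hf'.injOn, hg'.injOn, ?_⟩)
  intro x hx y hy hxy
  exact (hg'.mapsTo hy).2 (hxy ▸ hf'.mapsTo hx)

section HousingMarket

variable {N : ℕ} {U : Fin N → Fin N → ℝ} {σ σ' : Fin N → Fin N} {S A : Set (Fin N)}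

theorem Blocks.congr (h : Blocks U σ S) (hσ : EqOn σ σ' S) : Blocks U σ' S := by
  obtain ⟨hS, τ, hmaps, hinj, hbetter⟩ := h
  exact ⟨hS, τ, hmaps, hinj, fun i hi => hσ hi ▸ hbetter i hi⟩

theorem not_blocks_of_forall_le (hSA : S ⊆ A) {i : Fin N} (hi : i ∈ S)
    (hfav : ∀ x ∈ A, U i x ≤ U i (σ i)) : ¬ Blocks U σ S := by
  rintro ⟨-, τ, hmaps, -, hbetter⟩
  exact (hbetter i hi).not_ge (hfav _ (hSA (hmaps hi)))

variable (U) in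
theorem exists_bijOn_forall_not_blocks (A : Set (Fin N)) :
    ∃ σ : Fin N → Fin N, BijOn σ A A ∧ ∀ S ⊆ A, ¬ Blocks U σ S := by
  classical
  induction A using WellFoundedLT.induction with
  | _ A ih =>
  rcases A.eq_empty_or_nonempty with rfl | hA
  · exact ⟨id, bijOn_id ∅, fun S hS hB => hB.1.ne_empty (subset_empty_iff.1 hS)⟩
  have hfav : ∀ i, ∃ x ∈ A, ∀ y ∈ A, U i y ≤ U i x :=
    fun i => exists_max_image A (U i) A.toFinite hA
  choose f hfA hfmax using hfav
  have : Nonempty (Fin N) := hA.to_subtype.map Subtype.val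
  set C := periodicPts f
  have hCA : C ⊆ A := periodicPts_subset_range.trans (range_subset_iff.2 hfA)
  obtain ⟨σ', hσ', hσ'_unblocked⟩ :=
    ih (A \ C) (LE.le.sdiff_ssubset_of_nonempty hCA (periodicPts_nonempty f))
  refine ⟨C.piecewise f σ', (bijOn_periodicPts f).piecewise_of_subset hCA hσ',
    fun S hSA => ?_⟩
  by_cases hSC : ∃ i ∈ S, i ∈ C
  · obtain ⟨i, hiS, hiC⟩ := hSC
    exact not_blocks_of_forall_le hSA hiS (piecewise_eq_of_mem C f σ' hiC ▸ hfmax i)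
  · push Not at hSC
    exact fun hB => hσ'_unblocked S (fun i hi => ⟨hSA hi, hSC i hi⟩)
      (hB.congr fun i hi => piecewise_eq_of_notMem C f σ' (hSC i hi))

end HousingMarket

theorem core_matching_exists_general {N : ℕ}
    (U : Fin N → Fin N → ℝ) :
    ∃ σ : Equiv.Perm (Fin N), IsCoreMatching U ⇑σ := by
  obtain ⟨σ, hbij, hcore⟩ := exists_bijOn_forall_not_blocks U univ
  exact ⟨Equiv.ofBijective σ (bijOn_univ.1 hbij), fun S => hcore S (subset_univ S)⟩

/-- Every housing market with strict preferences has a core matching. -/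
theorem core_matching_exists {N : ℕ} (hN : 1 ≤ N)
    (U : Fin N → Fin N → ℝ) (hU : ∀ i, Function.Injective (U i)) :
    ∃ σ : Equiv.Perm (Fin N), IsCoreMatching U ⇑σ :=
  core_matching_exists_general U
end

section
/- Top-trading-cycle partition: for every housing market with strict preferences there exist an integer m with 1 ≤ m ≤ N and pairwise disjoint nonempty sets C_1, …, C_m ⊆ Fin N whose union is all of Fin N such that, for each k ∈ {1, …, m}, the map sending every player i ∈ C_k to i's most preferred house among the houses in C_k ∪ C_{k+1} ∪ ⋯ ∪ C_m (i.e., the unique maximizer of U i over that set, which exists since that set is nonempty, finite, and U i is injective) is a bijection from C_k onto C_k. -/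
open Set

lemma exists_cycle {α : Type*} [Finite α] (S : Set α) (hS : S.Nonempty)
    (f : α → α) (hf : Set.MapsTo f S S) :
    ∃ C : Set α, C ⊆ S ∧ C.Nonempty ∧ Set.BijOn f C C := by
  obtain ⟨a, ha⟩ := hS
  have hiter : ∀ (j : ℕ) (x : α), x ∈ S → f^[j] x ∈ S := by
    intro j
    induction j with
    | zero => simp
    | succ n ih => intro x hx; rw [Function.iterate_succ_apply]; exact ih _ (hf hx)
  obtain ⟨p, q, hne, hpq⟩ :=
    Finite.exists_ne_map_eq_of_infinite (fun n : ℕ => f^[n] a)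
  wlog hlt : p < q generalizing p q
  · exact this q p hne.symm hpq.symm (by omega)
  set b := f^[p] a with hb
  set d := q - p with hd
  have hd1 : 1 ≤ d := by omega
  have hcyc : f^[d] b = b := by
    simp only [hb, ← Function.iterate_add_apply]
    have : d + p = q := by omega
    rw [this]
    exact hpq.symm
  refine ⟨Set.range (fun j : ℕ => f^[j] b), ?_, ⟨b, 0, rfl⟩, ?_⟩
  · rintro x ⟨j, rfl⟩
    simp only [hb, ← Function.iterate_add_apply]
    exact hiter _ _ ha
  · have hmaps : Set.MapsTo f (Set.range (fun j : ℕ => f^[j] b))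
        (Set.range (fun j : ℕ => f^[j] b)) := by
      rintro x ⟨j, rfl⟩
      exact ⟨j + 1, Function.iterate_succ_apply' f j b⟩
    rw [← Set.Finite.surjOn_iff_bijOn_of_mapsTo (Set.toFinite _) hmaps]
    rintro x ⟨j, rfl⟩
    refine ⟨f^[j + d - 1] b, ⟨_, rfl⟩, ?_⟩
    have h1 : f (f^[j + d - 1] b) = f^[j + d] b := by
      rw [← Function.iterate_succ_apply' f]
      congr 1
      omega
    show f (f^[j + d - 1] b) = f^[j] b
    rw [h1, Function.iterate_add_apply, hcyc]

open scoped Classical in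
noncomputable def fav {N : ℕ} (U : Fin N → Fin N → ℝ) (T : Set (Fin N)) (i : Fin N) : Fin N :=
  if h : T.Nonempty then (Set.exists_max_image T (U i) (Set.toFinite T) h).choose else i

lemma fav_spec {N : ℕ} (U : Fin N → Fin N → ℝ) {T : Set (Fin N)} (h : T.Nonempty) (i : Fin N) :
    fav U T i ∈ T ∧ ∀ j ∈ T, U i j ≤ U i (fav U T i) := by
  classical
  rw [fav]
  rw [dif_pos h]
  have := (Set.exists_max_image T (U i) (Set.toFinite T) h).choose_spec
  exact ⟨this.1, this.2⟩

lemma ttc_aux {N : ℕ} (U : Fin N → Fin N → ℝ) :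
    ∀ (n : ℕ) (S : Set (Fin N)), S.Nonempty → S.ncard ≤ n →
    ∃ (m : ℕ), 1 ≤ m ∧ m ≤ S.ncard ∧
      ∃ C : Fin m → Set (Fin N),
        (∀ k, (C k).Nonempty) ∧
        (∀ k k', k ≠ k' → Disjoint (C k) (C k')) ∧
        (⋃ k, C k) = S ∧
        ∀ k : Fin m, ∃ t : Fin N → Fin N,
          (∀ i ∈ C k,
            t i ∈ (⋃ k' ∈ Set.Ici k, C k') ∧
            ∀ j ∈ (⋃ k' ∈ Set.Ici k, C k'), U i j ≤ U i (t i)) ∧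
          Set.BijOn t (C k) (C k) := by
  intro n
  induction n with
  | zero =>
    intro S hS hcard
    exfalso
    have := Set.ncard_pos (Set.toFinite S) |>.mpr hS
    omega
  | succ n ih =>
    intro S hS hcard
    set f : Fin N → Fin N := fav U S with hf
    have hfS : Set.MapsTo f S S := fun i _ => (fav_spec U hS i).1
    obtain ⟨C₀, hC₀S, hC₀ne, hbij⟩ := exists_cycle S hS f hfS
    have hScard : 1 ≤ S.ncard := Set.ncard_pos (Set.toFinite S) |>.mpr hS
    by_cases hS' : (S \ C₀).Nonempty
    · -- recurse
      have hlt : (S \ C₀).ncard < S.ncard := by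
        apply Set.ncard_lt_ncard _ (Set.toFinite S)
        constructor
        · exact Set.diff_subset
        · intro hsub
          obtain ⟨c, hc⟩ := hC₀ne
          exact (hsub (hC₀S hc)).2 hc
      obtain ⟨m', hm'1, hm'card, C', hne', hdisj', hunion', ht'⟩ :=
        ih (S \ C₀) hS' (by omega)
      have hsub' : ∀ k, C' k ⊆ S \ C₀ := by
        intro k
        rw [← hunion']
        exact Set.subset_iUnion C' k
      set D : Fin (m' + 1) → Set (Fin N) := Fin.cons C₀ C' with hD
      have hUnion : (⋃ k, D k) = S := by
        ext x
        simp only [Set.mem_iUnion, Fin.exists_fin_succ, hD, Fin.cons_zero, Fin.cons_succ]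
        constructor
        · rintro (hx | ⟨i, hx⟩)
          · exact hC₀S hx
          · exact (hsub' i hx).1
        · intro hx
          by_cases hx0 : x ∈ C₀
          · exact Or.inl hx0
          · right
            have : x ∈ ⋃ k, C' k := by rw [hunion']; exact ⟨hx, hx0⟩
            exact Set.mem_iUnion.mp this
      have key : ∀ j : Fin m',
          (⋃ k' ∈ Set.Ici (Fin.succ j), D k') = ⋃ k'' ∈ Set.Ici j, C' k'' := by
        intro j
        ext x
        simp only [Set.mem_iUnion, Set.mem_Ici, exists_prop]
        constructor
        · rintro ⟨k', hk', hx⟩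
          rcases Fin.eq_zero_or_eq_succ k' with rfl | ⟨i, rfl⟩
          · exact absurd (Fin.le_zero_iff.mp hk') (Fin.succ_ne_zero j)
          · rw [hD, Fin.cons_succ] at hx
            exact ⟨i, Fin.succ_le_succ_iff.mp hk', hx⟩
        · rintro ⟨k'', hk, hx⟩
          exact ⟨k''.succ, Fin.succ_le_succ_iff.mpr hk, by simpa [hD] using hx⟩
      refine ⟨m' + 1, by omega, by omega, D, ?_, ?_, hUnion, ?_⟩
      · intro k
        refine Fin.cases (by simpa [hD] using hC₀ne) (fun i => by simpa [hD] using hne' i) k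
      · intro k k' hkk'
        rcases Fin.eq_zero_or_eq_succ k with rfl | ⟨i, rfl⟩ <;>
          rcases Fin.eq_zero_or_eq_succ k' with rfl | ⟨i', rfl⟩
        · exact absurd rfl hkk'
        · simp only [hD, Fin.cons_zero, Fin.cons_succ]
          exact Set.disjoint_of_subset_right (hsub' i') Set.disjoint_sdiff_right
        · simp only [hD, Fin.cons_zero, Fin.cons_succ]
          exact Set.disjoint_of_subset_left (hsub' i) Set.disjoint_sdiff_left
        · simp only [hD, Fin.cons_succ]
          exact hdisj' i i' (fun h => hkk' (by rw [h]))
      · intro k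
        rcases Fin.eq_zero_or_eq_succ k with rfl | ⟨j, rfl⟩
        · have hT0 : (⋃ k' ∈ Set.Ici (0 : Fin (m' + 1)), D k') = S := by
            rw [← hUnion]
            ext x
            simp [Fin.zero_le]
          refine ⟨f, ?_, hbij⟩
          intro i _
          rw [hT0]
          exact ⟨(fav_spec U hS i).1, (fav_spec U hS i).2⟩
        · obtain ⟨t, hts, htb⟩ := ht' j
          refine ⟨t, ?_, by simpa [hD, Fin.cons_succ] using htb⟩
          intro i hi
          rw [hD, Fin.cons_succ] at hi
          rw [key j]
          exact hts i hi
    · -- C₀ = S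
      have hCS : C₀ = S := by
        have : S ⊆ C₀ := by
          rw [Set.not_nonempty_iff_eq_empty, Set.diff_eq_empty] at hS'
          exact hS'
        exact le_antisymm hC₀S this
      subst hCS
      refine ⟨1, le_refl 1, hScard, fun _ => C₀, fun _ => hC₀ne, ?_, Set.iUnion_const C₀, ?_⟩
      · intro k k' h
        exact absurd (Subsingleton.elim k k') h
      · intro k
        have hT : (⋃ k' ∈ Set.Ici k, C₀) = C₀ := by
          apply Set.eq_of_subset_of_subset
          · intro x hx
            simp only [Set.mem_iUnion] at hx
            obtain ⟨_, _, hx⟩ := hx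
            exact hx
          · intro x hx
            exact Set.mem_biUnion (Set.mem_Ici.mpr (le_refl k)) hx
        refine ⟨f, ?_, hbij⟩
        intro i _
        rw [hT]
        exact ⟨(fav_spec U hC₀ne i).1, (fav_spec U hC₀ne i).2⟩

/-- Top-trading-cycle partition: for every housing market with strict preferences
(`N ≥ 1` players/houses, utility matrix `U` with injective rows) there exist
`1 ≤ m ≤ N` and pairwise disjoint nonempty sets `C 0, …, C (m-1) ⊆ Fin N` covering
`Fin N` such that for each `k`, the map sending each player `i ∈ C k` to `i`'s most
preferred house among `C k ∪ C (k+1) ∪ ⋯ ∪ C (m-1)` is a bijection from `C k` onto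
`C k`. -/
theorem ttc_partition {N : ℕ} (hN : 1 ≤ N)
    (U : Fin N → Fin N → ℝ) (hU : ∀ i, Function.Injective (U i)) :
    ∃ (m : ℕ), 1 ≤ m ∧ m ≤ N ∧
      ∃ C : Fin m → Set (Fin N),
        (∀ k, (C k).Nonempty) ∧
        (∀ k k', k ≠ k' → Disjoint (C k) (C k')) ∧
        (⋃ k, C k) = Set.univ ∧
        ∀ k : Fin m, ∃ t : Fin N → Fin N,
          (∀ i ∈ C k,
            t i ∈ (⋃ k' ∈ Set.Ici k, C k') ∧
            ∀ j ∈ (⋃ k' ∈ Set.Ici k, C k'), U i j ≤ U i (t i)) ∧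
          Set.BijOn t (C k) (C k) := by
  have hne : (Set.univ : Set (Fin N)).Nonempty := by
    have : Nonempty (Fin N) := ⟨⟨0, hN⟩⟩
    exact Set.univ_nonempty
  have hcard : (Set.univ : Set (Fin N)).ncard = N := by
    rw [Set.ncard_univ, Nat.card_eq_fintype_card, Fintype.card_fin]
  obtain ⟨m, h1, h2, hrest⟩ := ttc_aux U N Set.univ hne (le_of_eq hcard)
  exact ⟨m, h1, hcard ▸ h2, hrest⟩
end

section
/- The top-trading-cycle matching is in the core: suppose C_1, …, C_m are pairwise disjoint nonempty subsets of Fin N whose union is Fin N such that for each k, the map t_k sending every player i ∈ C_k to i's most preferred house among C_k ∪ C_{k+1} ∪ ⋯ ∪ C_m is a bijection from C_k onto C_k. Then the matching σ defined by σ i = t_k i for i ∈ C_k is a permutation of Fin N and is a core matching. -/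
/-- The top-trading-cycle matching is in the core: if `C 0, …, C (m-1)` are pairwise
disjoint nonempty subsets of `Fin N` covering `Fin N` such that for each `k` the map
`t k`, sending every player `i ∈ C k` to `i`'s most preferred house among
`C k ∪ C (k+1) ∪ ⋯ ∪ C (m-1)`, is a bijection from `C k` onto `C k`, then the
matching `σ` defined by `σ i = t k i` for `i ∈ C k` is a permutation of `Fin N`
and a core matching. -/
theorem ttc_matching_is_core {N : ℕ} (hN : 1 ≤ N)
    (U : Fin N → Fin N → ℝ) (hU : ∀ i, Function.Injective (U i))
    (m : ℕ) (C : Fin m → Set (Fin N))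
    (hne : ∀ k, (C k).Nonempty)
    (hdisj : ∀ k k', k ≠ k' → Disjoint (C k) (C k'))
    (hcover : (⋃ k, C k) = Set.univ)
    (t : Fin m → Fin N → Fin N)
    (hmax : ∀ k : Fin m, ∀ i ∈ C k,
      t k i ∈ (⋃ k' ∈ Set.Ici k, C k') ∧
      ∀ j ∈ (⋃ k' ∈ Set.Ici k, C k'), U i j ≤ U i (t k i))
    (hbij : ∀ k : Fin m, Set.BijOn (t k) (C k) (C k))
    (σ : Fin N → Fin N)
    (hσ : ∀ k : Fin m, ∀ i ∈ C k, σ i = t k i) :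
    Function.Bijective σ ∧ IsCoreMatching U σ := by
  have hmem : ∀ i : Fin N, ∃ k, i ∈ C k := by
    intro i
    have : i ∈ ⋃ k, C k := hcover.symm ▸ Set.mem_univ i
    exact Set.mem_iUnion.mp this
  constructor
  · constructor
    · intro i j hij
      obtain ⟨k, hik⟩ := hmem i
      obtain ⟨k', hjk'⟩ := hmem j
      have hi : σ i ∈ C k := by rw [hσ k i hik]; exact (hbij k).mapsTo hik
      have hj : σ j ∈ C k' := by rw [hσ k' j hjk']; exact (hbij k').mapsTo hjk'
      have hkk' : k = k' := by
        by_contra h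
        exact (hdisj k k' h).ne_of_mem hi hj hij
      subst hkk'
      apply (hbij k).injOn hik hjk'
      rw [← hσ k i hik, ← hσ k j hjk', hij]
    · intro j
      obtain ⟨k, hjk⟩ := hmem j
      obtain ⟨i, hik, hij⟩ := (hbij k).surjOn hjk
      exact ⟨i, by rw [hσ k i hik]; exact hij⟩
  · intro S ⟨hSne, τ, hmaps, hinj, hlt⟩
    -- minimal k with S ∩ C k nonempty
    set K : Set (Fin m) := {k | (S ∩ C k).Nonempty} with hK
    have hKne : K.Nonempty := by
      obtain ⟨i, hiS⟩ := hSne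
      obtain ⟨k, hik⟩ := hmem i
      exact ⟨k, ⟨i, hiS, hik⟩⟩
    obtain ⟨k₀, hk₀K, hk₀min⟩ := Set.exists_min_image K id (Set.toFinite K) hKne
    obtain ⟨i, hiS, hik₀⟩ := hk₀K
    have hτS : τ i ∈ S := hmaps hiS
    obtain ⟨k', hτk'⟩ := hmem (τ i)
    have hk₀k' : k₀ ≤ k' := hk₀min k' ⟨τ i, hτS, hτk'⟩
    have hτmem : τ i ∈ ⋃ k'' ∈ Set.Ici k₀, C k'' :=
      Set.mem_biUnion hk₀k' hτk'
    have hle : U i (τ i) ≤ U i (t k₀ i) := (hmax k₀ i hik₀).2 _ hτmem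
    have := hlt i hiS
    rw [hσ k₀ i hik₀] at this
    exact absurd hle (not_le.mpr this)
end

section
/- Gap-sum bound: let N be a positive integer, Δ > 0, and let u : Fin N → ℝ satisfy |u k − u k'| ≥ Δ for all k ≠ k'. Then for every j ∈ Fin N, the sum over all k with u k > u j of 1/(u k − u j)² is at most 2/Δ². -/
/-!
Sort the values above `a = u j` as `x₀ < x₁ < ⋯`. Consecutive values, and `a` and `x₀`, are at least
`Δ` apart, so `xₘ - a ≥ (m + 1) Δ` and the sum is at most `Δ⁻² ∑ₘ (m + 1)⁻² ≤ 2 / Δ²`.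
-/

open Finset

lemma add_le_of_le_abs_sub {Δ x y : ℝ} (hsep : Δ ≤ |x - y|) (hxy : y < x) : y + Δ ≤ x := by
  rw [abs_of_pos (sub_pos.2 hxy)] at hsep
  linarith

section Separated

variable {s : Finset ℝ} {a Δ : ℝ}

lemma add_succ_mul_le_orderEmbOfFin
    (hsep : (↑(insert a s) : Set ℝ).Pairwise fun x y => Δ ≤ |x - y|) (ha : ∀ x ∈ s, a < x)
    (i : Fin s.card) : a + ((i : ℝ) + 1) * Δ ≤ s.orderEmbOfFin rfl i := by
  set e := s.orderEmbOfFin rfl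
  have hmem : ∀ i, e i ∈ insert a s := fun i => mem_insert_of_mem (s.orderEmbOfFin_mem rfl i)
  obtain ⟨m, hm⟩ := i
  induction m with
  | zero =>
    have ha0 := ha _ (s.orderEmbOfFin_mem rfl ⟨0, hm⟩)
    simpa using add_le_of_le_abs_sub (hsep (hmem _) (mem_insert_self a s) ha0.ne') ha0
  | succ m ih =>
    have hlt : e ⟨m, by omega⟩ < e ⟨m + 1, hm⟩ := e.strictMono (Fin.mk_lt_mk.2 m.lt_succ_self)
    have hstep := add_le_of_le_abs_sub (hsep (hmem _) (hmem _) hlt.ne') hlt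
    push_cast
    linarith [ih (by omega)]

theorem sum_one_div_sq_sub_le_of_separated (hΔ : 0 < Δ)
    (hsep : (↑(insert a s) : Set ℝ).Pairwise fun x y => Δ ≤ |x - y|) (ha : ∀ x ∈ s, a < x) :
    ∑ x ∈ s, 1 / (x - a) ^ 2 ≤ 2 / Δ ^ 2 := by
  have hterm (i : Fin s.card) :
      1 / (s.orderEmbOfFin rfl i - a) ^ 2 ≤ 1 / ((i : ℝ) + 1) ^ 2 / Δ ^ 2 := by
    rw [div_div, ← mul_pow]
    gcongr
    linarith [add_succ_mul_le_orderEmbOfFin hsep ha i]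
  calc ∑ x ∈ s, 1 / (x - a) ^ 2
      = ∑ i : Fin s.card, 1 / (s.orderEmbOfFin rfl i - a) ^ 2 := by
        conv_lhs => rw [← s.map_orderEmbOfFin_univ rfl, sum_map]
        rfl
    _ ≤ ∑ i : Fin s.card, 1 / ((i : ℝ) + 1) ^ 2 / Δ ^ 2 := sum_le_sum fun i _ => hterm i
    _ = (∑ i ∈ Ioo 0 (s.card + 1), ((i : ℝ) ^ 2)⁻¹) / Δ ^ 2 := by
        rw [← sum_div, Fin.sum_univ_eq_sum_range (fun i => 1 / ((i : ℝ) + 1) ^ 2),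
          ← Ico_add_one_left_eq_Ioo, sum_Ico_eq_sum_range]
        simp [add_comm]
    _ ≤ 2 / Δ ^ 2 := by
        gcongr
        simpa using sum_Ioo_inv_sq_le (α := ℝ) 0 (s.card + 1)

end Separated

theorem gap_sum_bound_general (N : ℕ) (Δ : ℝ) (hΔ : 0 < Δ)
    (u : Fin N → ℝ) (hsep : ∀ k k', k ≠ k' → Δ ≤ |u k - u k'|)
    (j : Fin N) :
    ∑ k ∈ Finset.univ.filter (fun k => u j < u k), 1 / (u k - u j) ^ 2
      ≤ 2 / Δ ^ 2 := by
  have hinj : Function.Injective u := fun k k' h => by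
    by_contra hne
    have := hsep k k' hne
    rw [h, sub_self, abs_zero] at this
    linarith
  rw [← sum_image (g := u) (f := fun x => 1 / (x - u j) ^ 2) hinj.injOn]
  refine sum_one_div_sq_sub_le_of_separated hΔ ?_ (by simp)
  have hrange : (↑(insert (u j) ((univ.filter fun k => u j < u k).image u)) : Set ℝ) ⊆
      Set.range u := by
    simp [Set.insert_subset_iff, Set.image_subset_iff]
  rintro _ hx _ hy hxy
  obtain ⟨k, rfl⟩ := hrange hx
  obtain ⟨k', rfl⟩ := hrange hy
  exact hsep k k' fun h => hxy (congrArg u h)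

/-- Gap-sum bound: if the values of `u : Fin N → ℝ` are pairwise separated by at
least `Δ > 0`, then for every `j` the sum over all `k` with `u k > u j` of
`1 / (u k - u j)²` is at most `2 / Δ²`. -/
theorem gap_sum_bound (N : ℕ) (hN : 0 < N) (Δ : ℝ) (hΔ : 0 < Δ)
    (u : Fin N → ℝ) (hsep : ∀ k k', k ≠ k' → Δ ≤ |u k - u k'|)
    (j : Fin N) :
    ∑ k ∈ Finset.univ.filter (fun k => u j < u k), 1 / (u k - u j) ^ 2
      ≤ 2 / Δ ^ 2 :=
  gap_sum_bound_general N Δ hΔ u hsep j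
end

section
/- Deterministic regret decomposition for single-top-trading-cycle instances: let N, T be positive integers, let U : Fin N → Fin N → ℝ have injective rows with 0 ≤ U i j ≤ 1 for all i, j, and suppose the map μ* sending each player i to their most preferred house (the unique maximizer of U i) is a bijection of Fin N. Let A : Fin T → Fin N → Fin N record the house A t i proposed by player i in round t; say player i is successfully matched in round t if A t i' ≠ A t i for every i' ≠ i, and define i's reward in round t as r t i = U i (A t i) if i is successfully matched in round t and r t i = 0 otherwise. For a fixed player i, define the pseudo-regret PR_i = ∑_{t} (U i (μ* i) − r t i), the gaps Δ^{(i)}_j = U i (μ* i) − U i j for j ≠ μ* i, the minimum gap Δ^{(i)}_min = min_{j ≠ μ* i} Δ^{(i)}_j, the counts N^{(i)}_j = #{t : A t i = j and i is successfully matched in round t}, and M_i = #{(t, i') : i' ≠ i, A t i' = μ* i, and i' is successfully matched in round t}. Then PR_i ≥ max( Δ^{(i)}_min · M_i , ∑_{j ≠ μ* i} Δ^{(i)}_j · N^{(i)}_j ). -/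
open Finset
open scoped Classical

/-- Deterministic regret decomposition for single-top-trading-cycle instances.
Player `i` is successfully matched in round `t` if no other player proposes to the
same house; the reward is then `U i (A t i)`, and `0` otherwise (collision).  The
pseudo-regret of player `i` is at least both `Δmin · M` (where `M` counts the
successful pulls of `μstar i` by other players) and `∑_{j ≠ μstar i} Δ_j · N_j`
(where `N_j` counts the successful pulls of `j` by player `i`). -/
theorem regret_decomposition_sttcb
    (N T : ℕ) (hN : 0 < N) (hT : 0 < T)
    (U : Fin N → Fin N → ℝ) (hU : ∀ i, Function.Injective (U i))
    (hrange : ∀ i j, 0 ≤ U i j ∧ U i j ≤ 1)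
    (μstar : Fin N → Fin N)
    (hmax : ∀ i j, j ≠ μstar i → U i j < U i (μstar i))
    (hbij : Function.Bijective μstar)
    (A : Fin T → Fin N → Fin N) (i : Fin N) :
    max
      (sInf ((fun j => U i (μstar i) - U i j) '' {j | j ≠ μstar i}) *
        ((Finset.univ.filter (fun p : Fin T × Fin N =>
            p.2 ≠ i ∧ A p.1 p.2 = μstar i ∧
              ∀ i'' , i'' ≠ p.2 → A p.1 i'' ≠ A p.1 p.2)).card : ℝ))
      (∑ j ∈ Finset.univ.filter (fun j => j ≠ μstar i),
        (U i (μstar i) - U i j) *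
          ((Finset.univ.filter (fun t : Fin T =>
            A t i = j ∧ ∀ i', i' ≠ i → A t i' ≠ A t i)).card : ℝ))
    ≤ ∑ t : Fin T,
        (U i (μstar i) -
          (if ∀ i', i' ≠ i → A t i' ≠ A t i then U i (A t i) else 0)) := by
  set f : Fin T → ℝ := fun t =>
    U i (μstar i) - (if ∀ i', i' ≠ i → A t i' ≠ A t i then U i (A t i) else 0) with hf
  -- each regret term is nonnegative
  have hterm : ∀ t, 0 ≤ f t := by
    intro t
    by_cases hm : ∀ i', i' ≠ i → A t i' ≠ A t i
    · simp only [hf, if_pos hm, sub_nonneg]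
      by_cases hA : A t i = μstar i
      · rw [hA]
      · exact (hmax i _ hA).le
    · simp only [hf, if_neg hm, sub_zero]
      exact (hrange i (μstar i)).1
  have hPR0 : (0:ℝ) ≤ ∑ t : Fin T, f t := Finset.sum_nonneg fun t _ => hterm t
  rw [max_le_iff]
  constructor
  · -- first bound : Δmin * M ≤ PR
    set S := ((fun j => U i (μstar i) - U i j) '' {j | j ≠ μstar i}) with hS
    by_cases hne : S.Nonempty
    · have hSfin : S.Finite := Set.Finite.image _ (Set.toFinite _)
      have hbdd : BddBelow S := hSfin.bddBelow
      obtain ⟨j0, hj0, hj0eq⟩ := hne.csInf_mem hSfin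
      have hmin_le : ∀ j, j ≠ μstar i → sInf S ≤ U i (μstar i) - U i j := by
        intro j hj
        exact csInf_le hbdd ⟨j, hj, rfl⟩
      have hj0eq' : U i (μstar i) - U i j0 = sInf S := hj0eq
      have hmin_le' : sInf S ≤ U i (μstar i) := by
        have := (hrange i j0).1
        linarith
      have hmin0 : 0 ≤ sInf S := by
        have := hmax i j0 hj0
        linarith
      -- per round, at most one other player successfully pulls μstar i
      set P := (Finset.univ.filter (fun p : Fin T × Fin N =>
            p.2 ≠ i ∧ A p.1 p.2 = μstar i ∧
              ∀ i'' , i'' ≠ p.2 → A p.1 i'' ≠ A p.1 p.2)) with hP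
      set Tg := (Finset.univ.filter (fun t : Fin T =>
            ∃ i', i' ≠ i ∧ A t i' = μstar i ∧
              ∀ i'', i'' ≠ i' → A t i'' ≠ A t i')) with hTg
      have hinj : Set.InjOn Prod.fst (P : Set (Fin T × Fin N)) := by
        intro p hp q hq hpq
        simp only [hP, Finset.coe_filter, Set.mem_setOf_eq, Finset.mem_univ, true_and] at hp hq
        obtain ⟨hp1, hp2, hp3⟩ := hp
        obtain ⟨hq1, hq2, hq3⟩ := hq
        by_contra hne'
        have hsnd : p.2 ≠ q.2 := fun h => hne' (Prod.ext hpq h)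
        have hp2' : A q.1 p.2 = μstar i := by rw [← hpq]; exact hp2
        exact hq3 p.2 hsnd (hp2'.trans hq2.symm)
      have hsub : P.image Prod.fst ⊆ Tg := by
        intro t ht
        obtain ⟨p, hp, hpt⟩ := Finset.mem_image.mp ht
        simp only [hP, Finset.mem_filter, Finset.mem_univ, true_and] at hp
        simp only [hTg, Finset.mem_filter, Finset.mem_univ, true_and]
        exact ⟨p.2, hp.1, hpt ▸ hp.2.1, hpt ▸ hp.2.2⟩
      have hcard : P.card ≤ Tg.card := by
        rw [← Finset.card_image_of_injOn hinj]
        exact Finset.card_le_card hsub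
      have hround : ∀ t ∈ Tg, sInf S ≤ f t := by
        intro t ht
        simp only [hTg, Finset.mem_filter, Finset.mem_univ, true_and] at ht
        obtain ⟨i', hi', hA', hm'⟩ := ht
        have hAi : A t i ≠ μstar i := by
          intro h
          exact hm' i (Ne.symm hi') (h.trans hA'.symm)
        by_cases hm : ∀ i'', i'' ≠ i → A t i'' ≠ A t i
        · simp only [hf, if_pos hm]
          exact hmin_le _ hAi
        · simp only [hf, if_neg hm, sub_zero]
          exact hmin_le'
      calc sInf S * (P.card : ℝ) ≤ sInf S * (Tg.card : ℝ) := by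
            apply mul_le_mul_of_nonneg_left _ hmin0
            exact_mod_cast hcard
        _ = ∑ _t ∈ Tg, sInf S := by rw [Finset.sum_const, nsmul_eq_mul, mul_comm]
        _ ≤ ∑ t ∈ Tg, f t := Finset.sum_le_sum hround
        _ ≤ ∑ t : Fin T, f t :=
            Finset.sum_le_sum_of_subset_of_nonneg (Finset.subset_univ _)
              (fun t _ _ => hterm t)
    · rw [Set.not_nonempty_iff_eq_empty] at hne
      rw [hne, Real.sInf_empty, zero_mul]
      exact hPR0
  · -- second bound
    have key2 : ∀ t : Fin T,
        (∑ j ∈ Finset.univ.filter (fun j => j ≠ μstar i),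
          if (A t i = j ∧ ∀ i', i' ≠ i → A t i' ≠ A t i) then (U i (μstar i) - U i j) else 0)
        ≤ f t := by
      intro t
      simp only [hf]
      by_cases hm : ∀ i', i' ≠ i → A t i' ≠ A t i
      · rw [if_pos hm]
        by_cases hA : A t i = μstar i
        · rw [Finset.sum_eq_zero, hA, sub_self]
          intro j hj
          refine if_neg fun h => ?_
          exact (Finset.mem_filter.mp hj).2 (h.1.symm.trans hA)
        · rw [Finset.sum_eq_single (A t i)]
          · rw [if_pos ⟨rfl, hm⟩]
          · intro j hj hne'
            exact if_neg fun h => hne' h.1.symm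
          · intro h
            exact absurd (show A t i ∈ Finset.univ.filter (fun j => j ≠ μstar i) from
              Finset.mem_filter.mpr ⟨Finset.mem_univ _, hA⟩) h
      · rw [if_neg hm, Finset.sum_eq_zero]
        · rw [sub_zero]
          exact (hrange i (μstar i)).1
        · intro j hj
          exact if_neg fun h => hm h.2
    calc (∑ j ∈ Finset.univ.filter (fun j => j ≠ μstar i),
            (U i (μstar i) - U i j) *
              ((Finset.univ.filter (fun t : Fin T =>
                A t i = j ∧ ∀ i', i' ≠ i → A t i' ≠ A t i)).card : ℝ))
        = ∑ j ∈ Finset.univ.filter (fun j => j ≠ μstar i), ∑ t : Fin T,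
            (if (A t i = j ∧ ∀ i', i' ≠ i → A t i' ≠ A t i)
              then (U i (μstar i) - U i j) else 0) := by
          refine Finset.sum_congr rfl fun j hj => ?_
          rw [Finset.card_filter, Nat.cast_sum, Finset.mul_sum]
          refine Finset.sum_congr rfl fun t _ => ?_
          split_ifs <;> simp
      _ = ∑ t : Fin T, ∑ j ∈ Finset.univ.filter (fun j => j ≠ μstar i),
            (if (A t i = j ∧ ∀ i', i' ≠ i → A t i' ≠ A t i)
              then (U i (μstar i) - U i j) else 0) := Finset.sum_comm
      _ ≤ ∑ t : Fin T, f t := Finset.sum_le_sum fun t _ => key2 t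
end
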